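/- Every PAL formula is semantically equivalent (in int-semantics) to an EL_int formula: for all φ ∈ PAL there exists ψ ∈ EL_int with ⊨ φ ↔ ψ. -/

import Mathlib

/-- Formulas of the public announcement language PAL (with the `int` modality). -/
inductive Form : Type
  | atom : ℕ → Form
  | neg : Form → Form
  | and : Form → Form → Form
  | K : Form → Form
  | int : Form → Form
  | ann : Form → Form → Form

/-- Material implication, defined classically. -/
def Form.imp (φ ψ : Form) : Form := .neg (.and φ (.neg ψ))

/-- Int-semantics for PAL on a topological subset model with valuation `v`. -/
def sat {α : Type*} [TopologicalSpace α] (v : ℕ → Set α) : Form → α → Set α → Prop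
  | .atom n, x, _ => x ∈ v n
  | .neg φ, x, U => ¬ sat v φ x U
  | .and φ ψ, x, U => sat v φ x U ∧ sat v ψ x U
  | .K φ, x, U => ∀ y ∈ U, sat v φ y U
  | .int φ, x, U => x ∈ interior {y ∈ U | sat v φ y U}
  | .ann φ ψ, x, U =>
      x ∈ interior {y ∈ U | sat v φ y U} → sat v ψ x (interior {y ∈ U | sat v φ y U})

/-- A PAL formula is announcement-free iff it belongs to the fragment EL_int. -/
def annFree : Form → Prop
  | .atom _ => True
  | .neg φ => annFree φ
  | .and φ ψ => annFree φ ∧ annFree ψ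
  | .K φ => annFree φ
  | .int φ => annFree φ
  | .ann _ _ => False

/-!
An announcement `[θ]χ` at a point of the region `I ⊆ U` where `int θ` holds evaluates `χ` in
the submodel `I`. For announcement-free `χ` this submodel can be simulated in the original model
by relativizing every modality to `int θ`: knowledge quantifies only over the points of `U` in
`I`, and `int` takes the interior of the points of `U` that lie in `I` and satisfy the relativized
formula. Translating both components of an announcement before relativizing means that only
announcement-free formulas are ever relativized.
-/

namespace Form

/-- Relativization to the region where `int θ` holds. The `ann` case is a junk value: only
announcement-free formulas are ever relativized. -/
def relativize (θ : Form) : Form → Form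
  | .atom n => .atom n
  | .neg χ => .neg (relativize θ χ)
  | .and χ₁ χ₂ => .and (relativize θ χ₁) (relativize θ χ₂)
  | .K χ => .K (Form.imp (.int θ) (relativize θ χ))
  | .int χ => .int (.and (.int θ) (relativize θ χ))
  | .ann _ _ => .atom 0

def elimAnn : Form → Form
  | .atom n => .atom n
  | .neg φ => .neg (elimAnn φ)
  | .and φ ψ => .and (elimAnn φ) (elimAnn ψ)
  | .K φ => .K (elimAnn φ)
  | .int φ => .int (elimAnn φ)
  | .ann φ ψ => Form.imp (.int (elimAnn φ)) (relativize (elimAnn φ) (elimAnn ψ))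

theorem annFree_relativize {θ χ : Form} (hθ : annFree θ) (hχ : annFree χ) :
    annFree (relativize θ χ) := by
  induction χ <;> simp_all [relativize, annFree, Form.imp]

theorem annFree_elimAnn (φ : Form) : annFree (elimAnn φ) := by
  induction φ with
  | ann φ ψ ihφ ihψ =>
      exact ⟨ihφ, annFree_relativize ihφ ihψ⟩
  | _ => simp_all [elimAnn, annFree]

end Form

open Form

section Semantics

variable {α : Type*} [TopologicalSpace α] (v : ℕ → Set α)

theorem sat_imp (φ ψ : Form) (x : α) (U : Set α) :
    sat v (Form.imp φ ψ) x U ↔ (sat v φ x U → sat v ψ x U) := by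
  simp [Form.imp, sat]

theorem sat_relativize (θ : Form) (U : Set α) {χ : Form} (hχ : annFree χ) (x : α) :
    sat v χ x (interior {y ∈ U | sat v θ y U}) ↔ sat v (relativize θ χ) x U := by
  set I := interior {y ∈ U | sat v θ y U}
  have hIU : I ⊆ U := interior_subset.trans (Set.sep_subset _ _)
  induction χ generalizing x with
  | atom n => rfl
  | neg χ ih => exact not_congr (ih hχ x)
  | and χ₁ χ₂ ih₁ ih₂ => exact and_congr (ih₁ hχ.1 x) (ih₂ hχ.2 x)
  | K χ ih =>
      simp only [sat, relativize, sat_imp]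
      exact ⟨fun H y _ hy => (ih hχ y).mp (H y hy),
        fun H y hy => (ih hχ y).mpr (H y (hIU hy) hy)⟩
  | int χ ih =>
      have hsets : {y ∈ I | sat v χ y I} = {y ∈ U | y ∈ I ∧ sat v (relativize θ χ) y U} := by
        ext y
        exact ⟨fun ⟨hyI, hy⟩ => ⟨hIU hyI, hyI, (ih hχ y).mp hy⟩,
          fun ⟨_, hyI, hy⟩ => ⟨hyI, (ih hχ y).mpr hy⟩⟩
      simp only [sat, relativize, hsets]
      rfl
  | ann => cases hχ

theorem sat_elimAnn (φ : Form) (x : α) (U : Set α) : sat v φ x U ↔ sat v (elimAnn φ) x U := by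
  induction φ generalizing x U with
  | atom n => rfl
  | neg φ ih => exact not_congr (ih x U)
  | and φ ψ ihφ ihψ => exact and_congr (ihφ x U) (ihψ x U)
  | K φ ih => exact forall₂_congr fun y _ => ih y U
  | int φ ih => simp only [sat, elimAnn, ih]
  | ann φ ψ ihφ ihψ =>
      simp only [sat, elimAnn, sat_imp, ihφ, ihψ,
        sat_relativize v (elimAnn φ) U (annFree_elimAnn ψ)]

end Semantics

theorem pal_reduces_to_el_int.{u} (φ : Form) :
    ∃ ψ : Form, annFree ψ ∧
      ∀ (α : Type u) (_ : TopologicalSpace α) (v : ℕ → Set α) (x : α) (U : Set α),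
        x ∈ U → IsOpen U → (sat v φ x U ↔ sat v ψ x U) :=
  ⟨elimAnn φ, annFree_elimAnn φ, fun _ _ v x U _ _ => sat_elimAnn v φ x U⟩
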